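/- arXiv:0910.1699 — 2 statements merged into one kernel-verified Lean document; each statement's English description precedes it below -/
import Mathlib

section
/- Let p be a prime, G a finite p-group, k = ZMod p, kG the group algebra with Jacobson radical J. Let A be a finite type with a linear order, and let RLL be the reverse length-lexicographical order on the free monoid M on A (the order opposite to: shorter words first, words of equal length compared lexicographically). Let φ : FreeAlgebra k A →ₐ[k] kG be a surjective k-algebra homomorphism with φ(x_a) ∈ J for every generator. Then for every r ≥ 0: (1) the family (φ(w)) over RLL-nontips w of length ≥ r is a k-basis of J^r; (2) the images in J^r/J^{r+1} of φ(w), as w runs over the RLL-nontips of length exactly r, form a k-basis of J^r/J^{r+1}. -/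
/-!
The images of the words of length `≥ n` span `J ^ n`: the letters map into `J`, and `J` meets
`k · 1` trivially, so `J` is spanned by the images of the nonempty words. As `J` is nilpotent,
only finitely many words have a nonzero image. Ordering words length-lexicographically, a word is
a tip exactly when its image lies in the span of the images of the LL-larger words. Then the
nontips are linearly independent (the LL-least word in a relation would be a tip), and descending
induction over the finitely many words with nonzero image writes every image as a combination of
images of LL-larger nontips, which are at least as long. Part (2) is the quotient of the basis of
`J ^ r` by its sub-basis of `J ^ (r + 1)`.
-/

/-- The monomial in the free algebra corresponding to a word in the free monoid. -/
noncomputable def wordMonomial (k : Type*) [CommRing k] {A : Type*} (w : FreeMonoid A) :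
    FreeAlgebra k A :=
  FreeMonoid.lift (FreeAlgebra.ι k) w

/-- The strict length-lexicographical order on words: shorter words first,
words of equal length compared lexicographically. -/
def LLlt {A : Type*} [LinearOrder A] (w₁ w₂ : FreeMonoid A) : Prop :=
  w₁.toList.length < w₂.toList.length ∨
    (w₁.toList.length = w₂.toList.length ∧ List.Lex (· < ·) w₁.toList w₂.toList)

/-- The strict reverse length-lexicographical order: the opposite of `LLlt`. -/
def RLLlt {A : Type*} [LinearOrder A] (w₁ w₂ : FreeMonoid A) : Prop :=
  LLlt w₂ w₁

open Submodule Set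

section Nontips

variable (K : Type*) {V ι : Type*} [DivisionRing K] [AddCommGroup V] [Module K V] [LinearOrder ι]

def nontips (v : ι → V) : Set ι :=
  {i | v i ∉ span K (v '' Ioi i)}

variable {K} (v : ι → V)

theorem linearIndepOn_nontips : LinearIndepOn K v (nontips K v) := by
  classical
  refine linearIndepOn_of_finite _ fun t ht htfin => ?_
  lift t to Finset ι using htfin
  induction t using Finset.induction_on_min with
  | empty => simp
  | insert a t hlt ih =>
    rw [Finset.coe_insert, insert_subset_iff] at ht
    rw [Finset.coe_insert]
    exact (ih ht.2).insert fun hmem => ht.1 (span_mono (image_mono hlt) hmem)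

theorem mem_span_image_nontips_inter_Ici (hv : (Function.support v).Finite) (i : ι) :
    v i ∈ span K (v '' (nontips K v ∩ Ici i)) := by
  by_cases hi : i ∈ Function.support v
  swap
  · rw [Function.notMem_support.1 hi]
    exact zero_mem _
  refine (hv.wellFoundedOn (r := (· > ·))).induction hi
    (P := fun j => v j ∈ span K (v '' (nontips K v ∩ Ici j))) fun j _ ih => ?_
  by_cases hj : j ∈ nontips K v
  · exact subset_span ⟨j, ⟨hj, self_mem_Ici⟩, rfl⟩
  have htail : span K (v '' Ioi j) ≤ span K (v '' (nontips K v ∩ Ici j)) := by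
    rw [span_le]
    rintro _ ⟨l, hjl, rfl⟩
    by_cases hl : l ∈ Function.support v
    · exact span_mono (image_mono (inter_subset_inter_right _ (Ici_subset_Ici.2 hjl.le)))
        (ih l hl hjl)
    · rw [Function.notMem_support.1 hl]
      exact zero_mem _
  exact htail (not_not.1 hj)

theorem span_image_nontips_inter (hv : (Function.support v).Finite) {s : Set ι}
    (hs : IsUpperSet s) : span K (v '' (nontips K v ∩ s)) = span K (v '' s) := by
  refine le_antisymm (span_mono (image_mono inter_subset_right)) (span_le.2 ?_)
  rintro _ ⟨i, hi, rfl⟩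
  exact span_mono (image_mono (inter_subset_inter_right _ (hs.Ici_subset hi)))
    (mem_span_image_nontips_inter_Ici v hv i)

end Nontips

section Graded

variable {K V ι : Type*} [DivisionRing K] [AddCommGroup V] [Module K V]

theorem Submodule.map_mkQ_span_union (s t : Set V) :
    map (span K s).mkQ (span K (s ∪ t)) = span K ((span K s).mkQ '' t) := by
  rw [span_union, map_sup, mkQ_map_self, bot_sup_eq, map_span]

variable (v : ι → V) (P : ι → Prop) (d : ι → ℕ) (n : ℕ)

theorem setOf_and_le_eq_union :
    {i | P i ∧ n ≤ d i} = {i | P i ∧ n + 1 ≤ d i} ∪ {i | P i ∧ d i = n} := by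
  ext i
  simp only [mem_union, mem_ofPred_eq, ← and_or_left]
  exact and_congr_right fun _ => by omega

theorem linearIndepOn_mkQ_setOf_eq (h : LinearIndepOn K v {i | P i ∧ n ≤ d i}) :
    LinearIndepOn K ((span K (v '' {i | P i ∧ n + 1 ≤ d i})).mkQ ∘ v) {i | P i ∧ d i = n} := by
  have hdisj : Disjoint {i | P i ∧ n + 1 ≤ d i} {i | P i ∧ d i = n} :=
    disjoint_left.2 fun i hi hi' => by
      simp only [mem_ofPred_eq] at hi hi'
      omega
  rw [setOf_and_le_eq_union P d n] at h
  exact ((linearIndepOn_union_iff_quotient hdisj).1 h).2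

theorem span_mkQ_image_setOf_eq :
    span K ((span K (v '' {i | P i ∧ n + 1 ≤ d i})).mkQ '' (v '' {i | P i ∧ d i = n})) =
      map (span K (v '' {i | P i ∧ n + 1 ≤ d i})).mkQ (span K (v '' {i | P i ∧ n ≤ d i})) := by
  rw [setOf_and_le_eq_union P d n, image_union, map_mkQ_span_union]

end Graded

section Words

variable {A : Type*}

theorem span_range_algHom_wordMonomial {k R : Type*} [CommRing k] [Semiring R] [Algebra k R]
    (φ : FreeAlgebra k A →ₐ[k] R) (hφ : Function.Surjective φ) :
    span k (range (φ ∘ wordMonomial k)) = ⊤ := by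
  change span k (range (φ.toLinearMap ∘ FreeMonoid.lift (FreeAlgebra.ι k))) = ⊤
  have hfree := congrArg Subalgebra.toSubmodule (FreeAlgebra.adjoin_range_ι k A)
  rw [Algebra.adjoin_eq_span, ← FreeMonoid.mrange_lift, MonoidHom.coe_mrange,
    Algebra.top_toSubmodule] at hfree
  rw [range_comp, ← map_span, hfree, Submodule.map_top,
    LinearMap.range_eq_top.2 hφ]

theorem finite_setOf_length_lt [Finite A] (n : ℕ) : {w : FreeMonoid A | w.length < n}.Finite :=
  (List.finite_length_lt A n).preimage FreeMonoid.toList.injective.injOn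

def llKey (w : FreeMonoid A) : ℕ ×ₗ List A :=
  toLex (w.length, w.toList)

theorem llKey_injective : Function.Injective (llKey (A := A)) :=
  fun _ _ h => FreeMonoid.toList.injective (congrArg (fun x => (ofLex x).2) h)

variable [LinearOrder A]

theorem RLLlt_iff_llKey_lt {u v : FreeMonoid A} : RLLlt u v ↔ llKey v < llKey u :=
  (Prod.Lex.toLex_lt_toLex (x := (v.length, v.toList)) (y := (u.length, u.toList))).symm

theorem length_le_of_llKey_le {u v : FreeMonoid A} (h : llKey u ≤ llKey v) :
    u.length ≤ v.length :=
  Prod.Lex.monotone_fst _ _ h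

/-- With this order, `Set.Ioi w` is the set of words that are RLL-smaller than `w`. -/
abbrev llOrder : LinearOrder (FreeMonoid A) :=
  LinearOrder.lift' llKey llKey_injective

end Words

theorem MonoidAlgebra.finite (k G : Type*) [Semiring k] [Finite k] [Finite G] :
    Finite (MonoidAlgebra k G) :=
  have : Finite (G →₀ k) := Finite.of_injective _ DFunLike.coe_injective
  Finite.of_injective _ MonoidAlgebra.coeff_injective

theorem MonoidAlgebra.isNilpotent_jacobson_bot (k G : Type*) [Ring k] [Finite k] [Monoid G]
    [Finite G] : IsNilpotent (⊥ : Ideal (MonoidAlgebra k G)).jacobson :=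
  have := MonoidAlgebra.finite k G
  have : IsArtinianRing (MonoidAlgebra k G) := isArtinian_of_finite
  IsArtinianRing.isNilpotent_jacobson_bot

section Filtration

variable {k R A : Type*} [Field k] [Ring R] [Algebra k R] {J : Ideal R} (F : FreeMonoid A →* R)

theorem mem_pow_length (hF : ∀ a, F (.of a) ∈ J) (w : FreeMonoid A) : F w ∈ J ^ w.length := by
  induction w using FreeMonoid.inductionOn with
  | one =>
    rw [map_one, FreeMonoid.length_one, Submodule.pow_zero, Ideal.one_eq_top]
    exact mem_top
  | of a =>
    rw [FreeMonoid.length_of, Submodule.pow_one]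
    exact hF a
  | mul x y hx hy =>
    rcases eq_or_ne y.length 0 with hy0 | hy0
    · rw [FreeMonoid.length_eq_zero.1 hy0, mul_one]
      exact hx
    · rw [map_mul, FreeMonoid.length_mul, Submodule.pow_add _ hy0]
      exact mul_mem_mul hx hy

theorem finite_support_of_isNilpotent [Finite A] (hF : ∀ a, F (.of a) ∈ J)
    (hJ : IsNilpotent J) : (Function.support F).Finite := by
  obtain ⟨N, hN⟩ := hJ
  refine (finite_setOf_length_lt N).subset fun w hw => show w.length < N from
    not_le.1 fun hNw => hw ?_
  simpa [hN] using Ideal.pow_le_pow_right hNw (mem_pow_length F hF w)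

theorem span_image_length_ge_le (hF : ∀ a, F (.of a) ∈ J) (n : ℕ) :
    span k (F '' {w | n ≤ w.length}) ≤ (J ^ n).restrictScalars k := by
  rw [span_le]
  rintro _ ⟨w, hw, rfl⟩
  exact Ideal.pow_le_pow_right hw (mem_pow_length F hF w)

theorem span_image_length_ge_mul_le (m n : ℕ) :
    span k (F '' {w | m ≤ w.length}) * span k (F '' {w | n ≤ w.length}) ≤
      span k (F '' {w | m + n ≤ w.length}) := by
  rw [span_mul_span]
  refine span_mono ?_
  rintro _ ⟨_, ⟨u, hu, rfl⟩, _, ⟨v, hv, rfl⟩, rfl⟩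
  refine ⟨u * v, ?_, map_mul F u v⟩
  rw [mem_ofPred_eq, FreeMonoid.length_mul]
  exact Nat.add_le_add hu hv

theorem restrictScalars_le_span_image_length_pos (hspan : span k (range F) = ⊤)
    (hF : ∀ a, F (.of a) ∈ J) (hJ : J ≠ ⊤) :
    J.restrictScalars k ≤ span k (F '' {w | 1 ≤ w.length}) := by
  have hsup : span k (range F) ≤ (k ∙ 1) ⊔ span k (F '' {w | 1 ≤ w.length}) := by
    rw [span_le]
    rintro _ ⟨w, rfl⟩
    rcases Nat.eq_zero_or_pos w.length with hw | hw
    · rw [FreeMonoid.length_eq_zero.1 hw, map_one]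
      exact mem_sup_left (mem_span_singleton_self 1)
    · exact mem_sup_right (subset_span ⟨w, hw, rfl⟩)
  intro x hx
  obtain ⟨_, hc, z, hz, rfl⟩ :=
    mem_sup.1 (hsup (hspan.symm ▸ mem_top : x ∈ span k (range F)))
  obtain ⟨c, rfl⟩ := mem_span_singleton.1 hc
  obtain rfl | hc0 := eq_or_ne c 0
  · simpa using hz
  have hzJ : z ∈ J := Submodule.pow_one J ▸ span_image_length_ge_le F hF 1 hz
  have hcJ : algebraMap k R c ∈ J := by
    rw [Algebra.algebraMap_eq_smul_one]
    simpa using J.sub_mem hx hzJ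
  exact absurd (J.eq_top_of_isUnit_mem hcJ ((isUnit_iff_ne_zero.2 hc0).map _)) hJ

theorem span_image_length_ge_eq (hspan : span k (range F) = ⊤) (hF : ∀ a, F (.of a) ∈ J)
    (hJ : J ≠ ⊤) (n : ℕ) : span k (F '' {w | n ≤ w.length}) = (J ^ n).restrictScalars k := by
  refine le_antisymm (span_image_length_ge_le F hF n) ?_
  induction n with
  | zero => simp [hspan]
  | succ n ih =>
    intro x hx
    rw [restrictScalars_mem, Submodule.pow_succ] at hx
    refine Submodule.mul_induction_on hx (fun m hm j hj => ?_) fun _ _ => add_mem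
    exact span_image_length_ge_mul_le F n 1
      (mul_mem_mul (ih hm) (restrictScalars_le_span_image_length_pos F hspan hF hJ hj))

theorem linearIndepOn_and_span_nontips_length_ge [Finite A] [LinearOrder A]
    (hspan : span k (range F) = ⊤) (hF : ∀ a, F (.of a) ∈ J) (hJ : J ≠ ⊤) (hnil : IsNilpotent J)
    (IsTip : FreeMonoid A → Prop)
    (hTip : ∀ w, IsTip w ↔ F w ∈ span k (F '' {v | RLLlt v w})) (n : ℕ) :
    LinearIndepOn k F {w | ¬ IsTip w ∧ n ≤ w.length} ∧
      span k (F '' {w | ¬ IsTip w ∧ n ≤ w.length}) = (J ^ n).restrictScalars k := by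
  let : LinearOrder (FreeMonoid A) := llOrder
  have hnontips : {w | ¬ IsTip w} = nontips k F := by
    ext w
    simp only [hTip, nontips, RLLlt_iff_llKey_lt]
    rfl
  rw [ofPred_and, hnontips]
  refine ⟨(linearIndepOn_nontips F).mono inter_subset_left, ?_⟩
  rw [span_image_nontips_inter F (finite_support_of_isNilpotent F hF hnil),
    span_image_length_ge_eq F hspan hF hJ]
  exact fun u v huv hu => hu.trans (length_le_of_llKey_le huv)

end Filtration

theorem rll_nontips_basis_of_radical_powers_general
    (p : ℕ) (hp : p.Prime) (G : Type*) [Group G] [Fintype G]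
    (A : Type*) [Finite A] [LinearOrder A]
    (J : Ideal (MonoidAlgebra (ZMod p) G))
    (hJ : J = (⊥ : Ideal (MonoidAlgebra (ZMod p) G)).jacobson)
    (φ : FreeAlgebra (ZMod p) A →ₐ[ZMod p] MonoidAlgebra (ZMod p) G)
    (hsurj : Function.Surjective φ)
    (hrad : ∀ a : A, φ (FreeAlgebra.ι (ZMod p) a) ∈ J)
    (IsTip : FreeMonoid A → Prop)
    (hTip : ∀ w, IsTip w ↔ φ (wordMonomial (ZMod p) w) ∈
      Submodule.span (ZMod p) ((fun v => φ (wordMonomial (ZMod p) v)) '' {v | RLLlt v w})) :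
    ∀ r : ℕ,
      -- (1) images of nontips of length ≥ r form a basis of J^r
      (LinearIndependent (ZMod p)
        (fun w : {w : FreeMonoid A // ¬ IsTip w ∧ r ≤ w.toList.length} =>
          φ (wordMonomial (ZMod p) w.1)) ∧
       Submodule.span (ZMod p)
        (Set.range (fun w : {w : FreeMonoid A // ¬ IsTip w ∧ r ≤ w.toList.length} =>
          φ (wordMonomial (ZMod p) w.1))) = Submodule.restrictScalars (ZMod p) (J ^ r)) ∧
      -- (2) images in kG/J^{r+1} of the nontips of length exactly r form a basis of the
      -- image of J^r, i.e. of J^r/J^{r+1}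
      (LinearIndependent (ZMod p)
        (fun w : {w : FreeMonoid A // ¬ IsTip w ∧ w.toList.length = r} =>
          Submodule.Quotient.mk (p := Submodule.restrictScalars (ZMod p) (J ^ (r + 1)))
            (φ (wordMonomial (ZMod p) w.1))) ∧
       Submodule.span (ZMod p)
        (Set.range (fun w : {w : FreeMonoid A // ¬ IsTip w ∧ w.toList.length = r} =>
          Submodule.Quotient.mk (p := Submodule.restrictScalars (ZMod p) (J ^ (r + 1)))
            (φ (wordMonomial (ZMod p) w.1)))) =
        Submodule.map
          (Submodule.mkQ (Submodule.restrictScalars (ZMod p) (J ^ (r + 1))))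
          (Submodule.restrictScalars (ZMod p) (J ^ r))) := by
  have : Fact p.Prime := ⟨hp⟩
  let F : FreeMonoid A →* MonoidAlgebra (ZMod p) G :=
    (φ : FreeAlgebra (ZMod p) A →* MonoidAlgebra (ZMod p) G).comp
      (FreeMonoid.lift (FreeAlgebra.ι (ZMod p)))
  have hradF : ∀ a, F (.of a) ∈ J := fun a => by simpa [F] using hrad a
  have hJtop : J ≠ ⊤ := by
    rw [hJ, Ne, Ideal.jacobson_eq_top_iff]
    exact bot_ne_top
  have hbasis := linearIndepOn_and_span_nontips_length_ge F
    (span_range_algHom_wordMonomial φ hsurj) hradF hJtop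
    (hJ ▸ MonoidAlgebra.isNilpotent_jacobson_bot _ _) IsTip hTip
  intro r
  rw [← (hbasis (r + 1)).2, ← (hbasis r).2]
  refine ⟨⟨(hbasis r).1, by rw [image_eq_range]; rfl⟩,
    linearIndepOn_mkQ_setOf_eq F _ _ r (hbasis r).1, ?_⟩
  rw [← span_mkQ_image_setOf_eq, image_image]
  refine congrArg (span (ZMod p)) (Eq.symm ?_)
  exact image_eq_range _ _

/-- with respect to the reverse length-lexicographic order, (1) the images of
the nontips of length at least `r` form a basis of `J^r`, and (2) the images of the
nontips of length exactly `r` give a basis of `J^r/J^{r+1}` (realised inside `kG/J^{r+1}`). -/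
theorem rll_nontips_basis_of_radical_powers
    (p : ℕ) (hp : p.Prime) (G : Type*) [Group G] [Fintype G] (hG : IsPGroup p G)
    (A : Type*) [Finite A] [LinearOrder A]
    (J : Ideal (MonoidAlgebra (ZMod p) G))
    (hJ : J = (⊥ : Ideal (MonoidAlgebra (ZMod p) G)).jacobson)
    (φ : FreeAlgebra (ZMod p) A →ₐ[ZMod p] MonoidAlgebra (ZMod p) G)
    (hsurj : Function.Surjective φ)
    (hrad : ∀ a : A, φ (FreeAlgebra.ι (ZMod p) a) ∈ J)
    (IsTip : FreeMonoid A → Prop)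
    (hTip : ∀ w, IsTip w ↔ φ (wordMonomial (ZMod p) w) ∈
      Submodule.span (ZMod p) ((fun v => φ (wordMonomial (ZMod p) v)) '' {v | RLLlt v w})) :
    ∀ r : ℕ,
      -- (1) images of nontips of length ≥ r form a basis of J^r
      (LinearIndependent (ZMod p)
        (fun w : {w : FreeMonoid A // ¬ IsTip w ∧ r ≤ w.toList.length} =>
          φ (wordMonomial (ZMod p) w.1)) ∧
       Submodule.span (ZMod p)
        (Set.range (fun w : {w : FreeMonoid A // ¬ IsTip w ∧ r ≤ w.toList.length} =>
          φ (wordMonomial (ZMod p) w.1))) = Submodule.restrictScalars (ZMod p) (J ^ r)) ∧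
      -- (2) images in kG/J^{r+1} of the nontips of length exactly r form a basis of the
      -- image of J^r, i.e. of J^r/J^{r+1}
      (LinearIndependent (ZMod p)
        (fun w : {w : FreeMonoid A // ¬ IsTip w ∧ w.toList.length = r} =>
          Submodule.Quotient.mk (p := Submodule.restrictScalars (ZMod p) (J ^ (r + 1)))
            (φ (wordMonomial (ZMod p) w.1))) ∧
       Submodule.span (ZMod p)
        (Set.range (fun w : {w : FreeMonoid A // ¬ IsTip w ∧ w.toList.length = r} =>
          Submodule.Quotient.mk (p := Submodule.restrictScalars (ZMod p) (J ^ (r + 1)))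
            (φ (wordMonomial (ZMod p) w.1)))) =
        Submodule.map
          (Submodule.mkQ (Submodule.restrictScalars (ZMod p) (J ^ (r + 1))))
          (Submodule.restrictScalars (ZMod p) (J ^ r))) :=
  rll_nontips_basis_of_radical_powers_general p hp G A J hJ φ hsurj hrad IsTip hTip
end

section
/- Let p be a prime, G a finite p-group, k = ZMod p, kG the group algebra with Jacobson radical J, A a finite type, and φ : FreeAlgebra k A →ₐ[k] kG a surjective k-algebra homomorphism with φ(x_a) ∈ J for every generator x_a. Then for every r ≥ 0, J^r equals the k-span of {φ(w) : w a word in A of length ≥ r}; in particular the images of the words of length at least r span J^r. -/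
/-
Words span the free algebra, so by surjectivity the images of all words span `kG`; the empty
word contributes only the scalars, which meet the proper ideal `J` trivially, hence the words of
length `≥ 1` span `J`. Writing `W r` for the span of the images of the words of length
`≥ r`, concatenation gives `W r * W s ≤ W (r + s)`, so `J ^ r = W 1 ^ r ≤ W r`; conversely each
word of length `n` maps into `J ^ n` because the generators lie in `J`.
-/

section WordSpan

variable {k : Type*} [CommRing k] {A : Type*}

@[simp]
theorem wordMonomial_one : wordMonomial k (1 : FreeMonoid A) = 1 :=
  map_one _

@[simp]
theorem wordMonomial_mul (w v : FreeMonoid A) :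
    wordMonomial k (w * v) = wordMonomial k w * wordMonomial k v :=
  map_mul _ _ _

@[simp]
theorem wordMonomial_of (a : A) : wordMonomial k (FreeMonoid.of a) = FreeAlgebra.ι k a :=
  FreeMonoid.lift_eval_of _ _

theorem span_range_wordMonomial : Submodule.span k (Set.range (wordMonomial k (A := A))) = ⊤ := by
  have : Set.range (wordMonomial k (A := A)) =
      (Submonoid.closure (Set.range (FreeAlgebra.ι k (X := A))) : Set (FreeAlgebra k A)) := by
    rw [← FreeMonoid.mrange_lift]
    rfl
  rw [this, ← Algebra.adjoin_eq_span, FreeAlgebra.adjoin_range_ι, Algebra.top_toSubmodule]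

variable {R : Type*} [Semiring R] [Algebra k R] (φ : FreeAlgebra k A →ₐ[k] R)

def wordSpan (r : ℕ) : Submodule k R :=
  Submodule.span k ((fun w => φ (wordMonomial k w)) '' {w : FreeMonoid A | r ≤ w.length})

theorem wordSpan_mul_le (r s : ℕ) : wordSpan φ r * wordSpan φ s ≤ wordSpan φ (r + s) := by
  rw [wordSpan, wordSpan, Submodule.span_mul_span, Submodule.span_le]
  rintro _ ⟨_, ⟨w, hw, rfl⟩, _, ⟨v, hv, rfl⟩, rfl⟩
  refine Submodule.subset_span ⟨w * v, ?_, by simp⟩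
  simp only [Set.mem_ofPred_eq, FreeMonoid.length_mul] at hw hv ⊢
  omega

theorem wordSpan_one_pow_le (r : ℕ) : wordSpan φ 1 ^ r ≤ wordSpan φ r := by
  induction r with
  | zero =>
    rw [pow_zero, Submodule.one_eq_span, Submodule.span_le, Set.singleton_subset_iff]
    exact Submodule.subset_span ⟨1, Nat.zero_le _, by simp⟩
  | succ r ih =>
    rw [pow_succ]
    exact (mul_le_mul_left ih _).trans (wordSpan_mul_le φ r 1)

theorem wordSpan_zero_eq_top (hsurj : Function.Surjective φ) : wordSpan φ 0 = ⊤ := by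
  have : {w : FreeMonoid A | 0 ≤ w.length} = Set.univ :=
    Set.eq_univ_of_forall fun w => w.length.zero_le
  rw [wordSpan, this, Set.image_univ]
  change Submodule.span k (Set.range (φ.toLinearMap ∘ wordMonomial k)) = ⊤
  rw [Set.range_comp, ← Submodule.map_span, span_range_wordMonomial, Submodule.map_top,
    LinearMap.range_eq_top]
  exact hsurj

theorem wordSpan_zero_eq_span_one_sup : wordSpan φ 0 = k ∙ (1 : R) ⊔ wordSpan φ 1 := by
  have : {w : FreeMonoid A | 0 ≤ w.length} = {1} ∪ {w | 1 ≤ w.length} := by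
    ext w
    simp [Nat.one_le_iff_ne_zero, FreeMonoid.length_eq_zero, em]
  rw [wordSpan, this, Set.image_union, Submodule.span_union, Set.image_singleton]
  simp [wordSpan]

theorem map_wordMonomial_mem_pow {J : Ideal R} (hrad : ∀ a, φ (FreeAlgebra.ι k a) ∈ J)
    (w : FreeMonoid A) : φ (wordMonomial k w) ∈ J ^ w.length := by
  rw [← FreeMonoid.ofList_toList w]
  induction w.toList using List.reverseRecOn with
  | nil =>
    rw [FreeMonoid.ofList_nil, wordMonomial_one, map_one, FreeMonoid.length_one,
      Submodule.pow_zero, Submodule.one_eq_span]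
    exact Submodule.mem_span_singleton_self 1
  | append_singleton l a ih =>
    rw [FreeMonoid.ofList_append, wordMonomial_mul, map_mul, FreeMonoid.length_mul,
      FreeMonoid.ofList_singleton, FreeMonoid.length_of, Submodule.pow_succ]
    exact Submodule.mul_mem_mul ih (by simpa using hrad a)

theorem wordSpan_le_pow {J : Ideal R} (hrad : ∀ a, φ (FreeAlgebra.ι k a) ∈ J) (r : ℕ) :
    wordSpan φ r ≤ (J ^ r).restrictScalars k := by
  rw [wordSpan, Submodule.span_le]
  rintro _ ⟨w, hw, rfl⟩
  exact Ideal.pow_le_pow_right hw (map_wordMonomial_mem_pow φ hrad w)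

end WordSpan

section Field

variable {k : Type*} [Field k] {A : Type*} {R : Type*} [Ring R] [Algebra k R]
  (φ : FreeAlgebra k A →ₐ[k] R) {J : Ideal R}

theorem Ideal.eq_zero_of_smul_one_mem (hJ : J ≠ ⊤) {c : k} (hc : c • (1 : R) ∈ J) : c = 0 := by
  by_contra hc0
  rw [← Algebra.algebraMap_eq_smul_one] at hc
  exact hJ (J.eq_top_of_isUnit_mem hc ((IsUnit.mk0 c hc0).map (algebraMap k R)))

theorem restrictScalars_le_wordSpan_one (hsurj : Function.Surjective φ) (hJ : J ≠ ⊤)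
    (hrad : ∀ a, φ (FreeAlgebra.ι k a) ∈ J) : J.restrictScalars k ≤ wordSpan φ 1 := by
  intro x hx
  have hx' : x ∈ k ∙ (1 : R) ⊔ wordSpan φ 1 := by
    rw [← wordSpan_zero_eq_span_one_sup, wordSpan_zero_eq_top φ hsurj]
    trivial
  obtain ⟨_, hc, y, hy, rfl⟩ := Submodule.mem_sup.mp hx'
  obtain ⟨c, rfl⟩ := Submodule.mem_span_singleton.mp hc
  have hyJ : y ∈ J := by simpa [Submodule.pow_one] using wordSpan_le_pow φ hrad 1 hy
  have hcJ : c • (1 : R) ∈ J := by simpa using J.sub_mem hx hyJ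
  rwa [Ideal.eq_zero_of_smul_one_mem hJ hcJ, zero_smul, zero_add]

theorem restrictScalars_pow_le_wordSpan (hsurj : Function.Surjective φ) (hJ : J ≠ ⊤)
    (hrad : ∀ a, φ (FreeAlgebra.ι k a) ∈ J) (r : ℕ) :
    (J ^ r).restrictScalars k ≤ wordSpan φ r := by
  rcases eq_or_ne r 0 with rfl | hr
  · rw [wordSpan_zero_eq_top φ hsurj]
    exact le_top
  · rw [Submodule.restrictScalars_pow hr]
    exact (pow_le_pow_left' (restrictScalars_le_wordSpan_one φ hsurj hJ hrad) r).trans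
      (wordSpan_one_pow_le φ r)

end Field

theorem radical_power_spanned_by_long_words_general
    (p : ℕ) (hp : p.Prime) (G : Type*) [Group G]
    (A : Type*)
    (J : Ideal (MonoidAlgebra (ZMod p) G))
    (hJ : J = (⊥ : Ideal (MonoidAlgebra (ZMod p) G)).jacobson)
    (φ : FreeAlgebra (ZMod p) A →ₐ[ZMod p] MonoidAlgebra (ZMod p) G)
    (hsurj : Function.Surjective φ)
    (hrad : ∀ a : A, φ (FreeAlgebra.ι (ZMod p) a) ∈ J) :
    ∀ r : ℕ,
      Submodule.restrictScalars (ZMod p) (J ^ r) =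
        Submodule.span (ZMod p)
          ((fun w => φ (wordMonomial (ZMod p) w)) ''
            {w : FreeMonoid A | r ≤ w.toList.length}) := by
  have : Fact p.Prime := ⟨hp⟩
  have hJ_ne_top : J ≠ ⊤ := by
    rw [hJ, Ne, Ideal.jacobson_eq_top_iff]
    exact bot_ne_top
  intro r
  exact le_antisymm (restrictScalars_pow_le_wordSpan φ hsurj hJ_ne_top hrad r)
    (wordSpan_le_pow φ hrad r)

/-- if `φ : FreeAlgebra k A →ₐ[k] kG` is surjective with all generators
landing in the Jacobson radical `J`, then for every `r` the power `J^r` is the `k`-span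
of the images of the words of length at least `r`. -/
theorem radical_power_spanned_by_long_words
    (p : ℕ) (hp : p.Prime) (G : Type*) [Group G] [Fintype G] (hG : IsPGroup p G)
    (A : Type*) [Finite A]
    (J : Ideal (MonoidAlgebra (ZMod p) G))
    (hJ : J = (⊥ : Ideal (MonoidAlgebra (ZMod p) G)).jacobson)
    (φ : FreeAlgebra (ZMod p) A →ₐ[ZMod p] MonoidAlgebra (ZMod p) G)
    (hsurj : Function.Surjective φ)
    (hrad : ∀ a : A, φ (FreeAlgebra.ι (ZMod p) a) ∈ J) :
    ∀ r : ℕ,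
      Submodule.restrictScalars (ZMod p) (J ^ r) =
        Submodule.span (ZMod p)
          ((fun w => φ (wordMonomial (ZMod p) w)) ''
            {w : FreeMonoid A | r ≤ w.toList.length}) :=
  radical_power_spanned_by_long_words_general p hp G A J hJ φ hsurj hrad
end
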